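/- The linear map φ: M_4 → M_4 defined by φ(X) = 3·Tr[X]·1_4 − X is 3-positive but not 4-positive. -/

import Mathlib

open Matrix ComplexOrder

/-- The map `id_k ⊗ φ` acting blockwise. -/
def blockMap {n m : ℕ} (k : ℕ)
    (φ : Matrix (Fin n) (Fin n) ℂ → Matrix (Fin m) (Fin m) ℂ)
    (M : Matrix (Fin k × Fin n) (Fin k × Fin n) ℂ) :
    Matrix (Fin k × Fin m) (Fin k × Fin m) ℂ :=
  fun p q => φ (fun a b => M (p.1, a) (q.1, b)) p.2 q.2

/-- `φ` is `k`-positive. -/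
def IsKPositive {n m : ℕ} (k : ℕ)
    (φ : Matrix (Fin n) (Fin n) ℂ → Matrix (Fin m) (Fin m) ℂ) : Prop :=
  ∀ M : Matrix (Fin k × Fin n) (Fin k × Fin n) ℂ,
    M.PosSemidef → (blockMap k φ M).PosSemidef

open Kronecker

/-! For `φ X = c Tr(X) 1 - X`, positivity of `id_k ⊗ φ` reduces by additivity to rank-one
matrices `v v*`. Reading `v, y ∈ ℂᵏ ⊗ ℂⁿ` as `k × n` matrices `V, Y` and putting `T = Yᴴ V`, the
quadratic form of `(id_k ⊗ φ)(v v*)` at `y` is `c ‖T‖₂² - |Tr T|²`.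

If `k < n`, then `V`, hence `T`, has a nonzero kernel vector `g`; since `T` then vanishes on `g`,
Cauchy–Schwarz gives `|Tr T|² ≤ (n - 1) ‖T‖₂²`, so `φ` is `k`-positive for `c ≥ n - 1`.
If `k = n`, taking `V = Y = 1` (the maximally entangled vector `∑ eₐ ⊗ eₐ`) gives the value
`c n - n²`, which is negative for `c < n`. -/

theorem Matrix.exists_mulVec_eq_zero_of_card_lt {K m n : Type*} [Field K] [Fintype m] [Fintype n]
    (A : Matrix m n K) (h : Fintype.card m < Fintype.card n) : ∃ g ≠ 0, A *ᵥ g = 0 := by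
  obtain ⟨g, hg, hne⟩ := Submodule.exists_mem_ne_zero_of_ne_bot
    (LinearMap.ker_ne_bot_of_finrank_lt (f := A.mulVecLin) (by simpa using h))
  exact ⟨g, hne, hg⟩

theorem norm_sum_mul_sq_le {ι : Type*} [Fintype ι] (f h : ι → ℂ) :
    ‖∑ i, f i * h i‖ ^ 2 ≤ (∑ i, ‖f i‖ ^ 2) * ∑ i, ‖h i‖ ^ 2 :=
  calc ‖∑ i, f i * h i‖ ^ 2 ≤ (∑ i, ‖f i‖ * ‖h i‖) ^ 2 := by
        gcongr
        exact (norm_sum_le _ _).trans_eq (by simp only [norm_mul])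
    _ ≤ _ := Finset.sum_mul_sq_le_sq_mul_sq _ _ _

theorem Matrix.trace_mul_conjTranspose_self_eq_sum_norm_sq {m n : Type*} [Fintype m] [Fintype n]
    (T : Matrix m n ℂ) : (T * Tᴴ).trace = ((∑ a, ∑ b, ‖T a b‖ ^ 2 : ℝ) : ℂ) := by
  simp [trace, mul_apply, RCLike.mul_conj]

theorem star_dotProduct_vecMulVec_self_mulVec {ι : Type*} [Fintype ι] (x y : ι → ℂ) :
    star y ⬝ᵥ (vecMulVec x (star x) *ᵥ y) = ((‖star y ⬝ᵥ x‖ ^ 2 : ℝ) : ℂ) := by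
  rw [vecMulVec_mulVec, dotProduct_smul, op_smul_eq_mul, star_dotProduct x y, RCLike.star_def,
    RCLike.mul_conj]
  push_cast
  rfl

section

variable {α m n : Type*} [Fintype m] [Fintype n] [Semiring α] [StarRing α]

theorem Matrix.star_uncurry_dotProduct_uncurry (Y V : Matrix m n α) :
    star (Function.uncurry Y) ⬝ᵥ Function.uncurry V = (Yᴴ * V).trace := by
  simp only [dotProduct, Fintype.sum_prod_type, trace, diag, mul_apply, conjTranspose_apply,
    Pi.star_apply]
  exact Finset.sum_comm

theorem Matrix.star_uncurry_dotProduct_kronecker_one_mulVec [DecidableEq n] (Y : Matrix m n α)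
    (A : Matrix m m α) :
    star (Function.uncurry Y) ⬝ᵥ ((A ⊗ₖ (1 : Matrix n n α)) *ᵥ Function.uncurry Y) =
      (Yᴴ * A * Y).trace := by
  simp only [dotProduct, mulVec, Fintype.sum_prod_type, kroneckerMap_apply, one_apply, trace,
    diag, mul_apply, conjTranspose_apply, Pi.star_apply, mul_ite, ite_mul, mul_one, mul_zero,
    zero_mul, Finset.sum_ite_eq, Finset.mem_univ, if_true, Finset.mul_sum, Finset.sum_mul,
    mul_assoc]
  rw [Finset.sum_comm]
  exact Finset.sum_congr rfl fun _ _ => Finset.sum_comm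

end

theorem norm_trace_sq_le_of_mulVec_eq_zero {ι : Type*} [Fintype ι] [DecidableEq ι]
    (T : Matrix ι ι ℂ) {g : ι → ℂ} (hg : g ≠ 0) (hTg : T *ᵥ g = 0) :
    ‖T.trace‖ ^ 2 ≤ ((Fintype.card ι : ℝ) - 1) * ∑ a, ∑ b, ‖T a b‖ ^ 2 := by
  set s : ℝ := ∑ i, ‖g i‖ ^ 2 with hs
  have hs_pos : 0 < s := by
    obtain ⟨i, hi⟩ := Function.ne_iff.mp hg
    exact Finset.sum_pos' (fun i _ => by positivity)
      ⟨i, Finset.mem_univ _, pow_pos (norm_pos_iff.mpr hi) 2⟩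
  -- `P` is `s` times the orthogonal projection onto `gᗮ`, so `T * P = s • T` as `T g = 0`.
  set P : Matrix ι ι ℂ := (s : ℂ) • 1 - vecMulVec g (star g)
  have hTP : T * P = (s : ℂ) • T := by
    simp [P, mul_sub, mul_vecMulVec, hTg]
  have hP_entry : ∀ a b, ‖P b a‖ ^ 2 =
      (if b = a then s ^ 2 - 2 * s * ‖g a‖ ^ 2 else 0) + ‖g b‖ ^ 2 * ‖g a‖ ^ 2 := by
    intro a b
    rcases eq_or_ne b a with rfl | hba
    · have : P b b = ((s - ‖g b‖ ^ 2 : ℝ) : ℂ) := by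
        simp [P, vecMulVec_apply, RCLike.mul_conj]
      rw [this, Complex.norm_real, Real.norm_eq_abs, sq_abs, if_pos rfl]
      ring
    · simp [P, hba, vecMulVec_apply, mul_pow]
  have hP : ∑ a, ∑ b, ‖P b a‖ ^ 2 = ((Fintype.card ι : ℝ) - 1) * s ^ 2 := by
    calc ∑ a, ∑ b, ‖P b a‖ ^ 2 = ∑ a, (s ^ 2 - 2 * s * ‖g a‖ ^ 2 + s * ‖g a‖ ^ 2) := by
          simp_rw [hP_entry, Finset.sum_add_distrib, Finset.sum_ite_eq', Finset.mem_univ,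
            if_true, ← Finset.sum_mul, ← hs]
      _ = ((Fintype.card ι : ℝ) - 1) * s ^ 2 := by
          simp only [Finset.sum_add_distrib, Finset.sum_sub_distrib, ← Finset.mul_sum, ← hs,
            Finset.sum_const, Finset.card_univ, nsmul_eq_mul]
          ring
  have hcs : ‖(s : ℂ) * T.trace‖ ^ 2 ≤
      (∑ a, ∑ b, ‖T a b‖ ^ 2) * (((Fintype.card ι : ℝ) - 1) * s ^ 2) := by
    have := norm_sum_mul_sq_le (fun x : ι × ι => T x.1 x.2) (fun x => P x.2 x.1)
    simp only [Fintype.sum_prod_type] at this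
    rwa [← hP, ← smul_eq_mul, ← trace_smul, ← hTP]
  rw [norm_mul, Complex.norm_real, Real.norm_of_nonneg hs_pos.le, mul_pow] at hcs
  nlinarith [pow_pos hs_pos 2]

section BlockMap

variable {n m k : ℕ}

theorem blockMap_sum {ι : Type*} [Fintype ι]
    (φ : Matrix (Fin n) (Fin n) ℂ →+ Matrix (Fin m) (Fin m) ℂ)
    (M : ι → Matrix (Fin k × Fin n) (Fin k × Fin n) ℂ) :
    blockMap k φ (∑ i, M i) = ∑ i, blockMap k φ (M i) := by
  ext p q
  have h : (∑ i, M i).submatrix (Prod.mk p.1) (Prod.mk q.1) =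
      ∑ i, (M i).submatrix (Prod.mk p.1) (Prod.mk q.1) := by
    ext a b
    simp only [submatrix_apply, Matrix.sum_apply]
  change φ ((∑ i, M i).submatrix (Prod.mk p.1) (Prod.mk q.1)) p.2 q.2 = _
  rw [h, map_sum, Matrix.sum_apply, Matrix.sum_apply]
  rfl

theorem blockMap_conjTranspose
    {φ : Matrix (Fin n) (Fin n) ℂ → Matrix (Fin m) (Fin m) ℂ}
    (hφ : ∀ X, φ Xᴴ = (φ X)ᴴ) (M : Matrix (Fin k × Fin n) (Fin k × Fin n) ℂ) :
    blockMap k φ Mᴴ = (blockMap k φ M)ᴴ := by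
  ext p q
  exact congrFun (congrFun (hφ fun a b => M (q.1, a) (p.1, b)) p.2) q.2

theorem isKPositive_of_vecMulVec (φ : Matrix (Fin n) (Fin n) ℂ →+ Matrix (Fin m) (Fin m) ℂ)
    (h : ∀ v : Fin k × Fin n → ℂ, (blockMap k φ (vecMulVec v (star v))).PosSemidef) :
    IsKPositive k φ := by
  intro M hM
  obtain ⟨r, v, rfl⟩ := posSemidef_iff_eq_sum_vecMulVec.mp hM
  rw [blockMap_sum]
  exact posSemidef_sum _ fun i _ => h (v i)

end BlockMap

def choiMap (n : ℕ) (c : ℝ) : Matrix (Fin n) (Fin n) ℂ →+ Matrix (Fin n) (Fin n) ℂ where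
  toFun X := ((c : ℂ) * X.trace) • 1 - X
  map_zero' := by simp
  map_add' X Y := by simp only [trace_add, mul_add, add_smul]; abel

theorem choiMap_apply (n : ℕ) (c : ℝ) (X : Matrix (Fin n) (Fin n) ℂ) :
    choiMap n c X = ((c : ℂ) * X.trace) • 1 - X := rfl

theorem choiMap_conjTranspose (n : ℕ) (c : ℝ) (X : Matrix (Fin n) (Fin n) ℂ) :
    choiMap n c Xᴴ = (choiMap n c X)ᴴ := by
  simp [choiMap_apply, trace_conjTranspose, conjTranspose_sub, conjTranspose_smul]

section ChoiMap

variable {n k : ℕ}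

theorem blockMap_choiMap_vecMulVec (c : ℝ) (V : Matrix (Fin k) (Fin n) ℂ) :
    blockMap k (choiMap n c) (vecMulVec (Function.uncurry V) (star (Function.uncurry V))) =
      (c : ℂ) • ((V * Vᴴ) ⊗ₖ (1 : Matrix (Fin n) (Fin n) ℂ)) -
        vecMulVec (Function.uncurry V) (star (Function.uncurry V)) := by
  ext p q
  simp only [Matrix.sub_apply, Matrix.smul_apply, kroneckerMap_apply, mul_apply,
    conjTranspose_apply, smul_eq_mul, ← mul_assoc]
  rfl

theorem star_uncurry_dotProduct_blockMap_choiMap_mulVec (c : ℝ)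
    (V Y : Matrix (Fin k) (Fin n) ℂ) :
    star (Function.uncurry Y) ⬝ᵥ
        (blockMap k (choiMap n c) (vecMulVec (Function.uncurry V) (star (Function.uncurry V))) *ᵥ
          Function.uncurry Y) =
      ((c * ∑ a, ∑ b, ‖(Yᴴ * V) a b‖ ^ 2 - ‖(Yᴴ * V).trace‖ ^ 2 : ℝ) : ℂ) := by
  have hT : Yᴴ * (V * Vᴴ) * Y = (Yᴴ * V) * (Yᴴ * V)ᴴ := by
    simp only [conjTranspose_mul, conjTranspose_conjTranspose, Matrix.mul_assoc]
  rw [blockMap_choiMap_vecMulVec, sub_mulVec, dotProduct_sub, smul_mulVec, dotProduct_smul,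
    star_uncurry_dotProduct_kronecker_one_mulVec, star_dotProduct_vecMulVec_self_mulVec,
    star_uncurry_dotProduct_uncurry, hT, trace_mul_conjTranspose_self_eq_sum_norm_sq,
    smul_eq_mul]
  push_cast
  ring

theorem choiMap_isKPositive {c : ℝ} (hk : k < n) (hc : (n : ℝ) - 1 ≤ c) :
    IsKPositive k (choiMap n c) := by
  refine isKPositive_of_vecMulVec _ fun v => ?_
  obtain ⟨V, rfl⟩ : ∃ V : Matrix (Fin k) (Fin n) ℂ, Function.uncurry V = v :=
    ⟨Function.curry v, Function.uncurry_curry v⟩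
  refine .of_dotProduct_mulVec_nonneg ?_ fun y => ?_
  · rw [IsHermitian, ← blockMap_conjTranspose (choiMap_conjTranspose n c),
      (posSemidef_vecMulVec_self_star _).isHermitian.eq]
  obtain ⟨Y, rfl⟩ : ∃ Y : Matrix (Fin k) (Fin n) ℂ, Function.uncurry Y = y :=
    ⟨Function.curry y, Function.uncurry_curry y⟩
  rw [star_uncurry_dotProduct_blockMap_choiMap_mulVec, Complex.zero_le_real, sub_nonneg]
  obtain ⟨g, hg, hVg⟩ := V.exists_mulVec_eq_zero_of_card_lt (by simpa using hk)
  have hTg : (Yᴴ * V) *ᵥ g = 0 := by rw [← mulVec_mulVec, hVg, mulVec_zero]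
  calc ‖(Yᴴ * V).trace‖ ^ 2 ≤ ((n : ℝ) - 1) * ∑ a, ∑ b, ‖(Yᴴ * V) a b‖ ^ 2 := by
        simpa using norm_trace_sq_le_of_mulVec_eq_zero _ hg hTg
    _ ≤ c * ∑ a, ∑ b, ‖(Yᴴ * V) a b‖ ^ 2 := by gcongr

theorem choiMap_not_isKPositive_self {c : ℝ} (hn : 0 < n) (hc : c < n) :
    ¬ IsKPositive n (choiMap n c) := by
  intro h
  set ω := Function.uncurry (1 : Matrix (Fin n) (Fin n) ℂ)
  have hform := (h _ (posSemidef_vecMulVec_self_star ω)).dotProduct_mulVec_nonneg ω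
  have hnorm : ∑ a, ∑ b, ‖(1 : Matrix (Fin n) (Fin n) ℂ) a b‖ ^ 2 = n := by
    simp [one_apply, apply_ite (fun z : ℂ => ‖z‖ ^ 2)]
  rw [star_uncurry_dotProduct_blockMap_choiMap_mulVec, conjTranspose_one, Matrix.one_mul,
    trace_one, hnorm, Complex.zero_le_real] at hform
  simp only [Fintype.card_fin, Complex.norm_natCast] at hform
  have hn' : (0 : ℝ) < n := by exact_mod_cast hn
  nlinarith

end ChoiMap

/-- Choi's map `X ↦ 3 Tr[X]·1 − X` on `M₄` is `3`-positive but not `4`-positive. -/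
theorem choi_map_three_positive_not_four_positive :
    IsKPositive 3 (fun X : Matrix (Fin 4) (Fin 4) ℂ =>
        ((3 : ℂ) * X.trace) • (1 : Matrix (Fin 4) (Fin 4) ℂ) - X) ∧
      ¬ IsKPositive 4 (fun X : Matrix (Fin 4) (Fin 4) ℂ =>
        ((3 : ℂ) * X.trace) • (1 : Matrix (Fin 4) (Fin 4) ℂ) - X) := by
  have hφ : (fun X : Matrix (Fin 4) (Fin 4) ℂ =>
      ((3 : ℂ) * X.trace) • (1 : Matrix (Fin 4) (Fin 4) ℂ) - X) = choiMap 4 3 := by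
    ext X : 1
    simp [choiMap_apply]
  rw [hφ]
  exact ⟨choiMap_isKPositive (by norm_num) (by norm_num),
    choiMap_not_isKPositive_self (by norm_num) (by norm_num)⟩
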